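/- arXiv:2605.20601 — 4 statements merged into one kernel-verified Lean document; each statement's English description precedes it below -/
import Mathlib

section
/- Let (Ω,𝓕,P) be a probability space carrying a random vector X : Ω → ℝ^d, random variables U : Ω → [0,1], V : Ω → [0,1], and ε : Ω → ℝ, and let β₀ : [0,1] → ℝ^d be Borel measurable. Define Y = ⟨X, β₀(U)⟩ + ε. Assume (i) ε is independent of the triple (X, V, U), and (ii) X and U are conditionally independent given the σ-algebra generated by V. Let F_ε(t) = P(ε ≤ t) and let κ denote a regular conditional distribution of U given V. Then for (P ∘ (X,V)⁻¹)-almost every (x,v), the regular conditional distribution of Y given (X,V) = (x,v) satisfies, for every y ∈ ℝ, P(Y ≤ y | X = x, V = v) = ∫_{[0,1]} F_ε(y − ⟨x, β₀(u)⟩) dκ_v(u). -/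
/-!
Given `(X, V) = (x, v)`, conditional independence of `X` and `U` given `V` makes `U` distributed
as `κ_v`, while `ε`, being independent of `(X, V, U)`, keeps its law `P ∘ ε⁻¹` and stays
independent of `U`. So `Y` given `(x, v)` is distributed as `⟪x, β₀ U'⟫ + ε'` with `U' ∼ κ_v` and
`ε' ∼ P ∘ ε⁻¹` independent, whose CDF at `y` is the `κ_v`-average of `F_ε (y - ⟪x, β₀ u⟫)`.
Finally `κ_v` is carried by `[0, 1]` for a.e. `v`, because `U` is.
-/

open MeasureTheory ProbabilityTheory
open scoped RealInnerProductSpace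

namespace ProbabilityTheory

variable {Ω α β γ : Type*} {mΩ : MeasurableSpace Ω} {mα : MeasurableSpace α}
  {mβ : MeasurableSpace β} {mγ : MeasurableSpace γ} {P : Measure Ω}

lemma hasCondDistrib_prodMkLeft_of_condIndepFun [IsFiniteMeasure P] [StandardBorelSpace Ω]
    [Nonempty Ω] [StandardBorelSpace α] [Nonempty α] [StandardBorelSpace β] [Nonempty β]
    {X : Ω → α} {U : Ω → β} {V : Ω → γ} (hX : Measurable X) (hU : Measurable U)
    (hV : Measurable V) (h : X ⟂ᵢ[V, hV; P] U) :
    HasCondDistrib U (fun ω ↦ (X ω, V ω)) ((condDistrib U V P).prodMkLeft α) P := by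
  have hVX : HasCondDistrib U (fun ω ↦ (V ω, X ω)) ((condDistrib U V P).prodMkRight α) P :=
    ⟨by fun_prop, (condDistrib_ae_eq_iff_measure_eq_compProd _ hU.aemeasurable _).mp
      ((condIndepFun_iff_condDistrib_prod_ae_eq_prodMkRight hU hX hV).mp h)⟩
  exact hVX.measurableEquiv_comp_right MeasurableEquiv.prodComm

lemma HasCondDistrib.ae_ae_mem {W : Ω → α} {U : Ω → β} {η : Kernel α β} [SFinite P]
    [IsSFiniteKernel η] (h : HasCondDistrib U W η P) {s : Set β} (hs : MeasurableSet s)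
    (hUs : ∀ᵐ ω ∂P, U ω ∈ s) : ∀ᵐ w ∂P.map W, ∀ᵐ u ∂η w, u ∈ s := by
  refine Measure.ae_ae_of_ae_compProd (p := fun q ↦ q.2 ∈ s) ?_
  rw [← h.map_eq, ae_map_iff h.aemeasurable (measurable_snd hs)]
  exact hUs

lemma HasCondDistrib.id_prod {W : Ω → α} {Z : Ω → β} {η : Kernel α β} [IsSFiniteKernel η]
    [SFinite P] (h : HasCondDistrib Z W η P) :
    HasCondDistrib (fun ω ↦ (W ω, Z ω)) W (Kernel.id ×ₖ η) P where
  aemeasurable := h.aemeasurable_fst.prodMk h.aemeasurable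
  map_eq := by
    have hW := h.aemeasurable_fst
    have hZ := h.aemeasurable_snd
    calc P.map (fun ω ↦ (W ω, W ω, Z ω))
        = (P.map (fun ω ↦ (W ω, Z ω))).map (fun p ↦ (p.1, p)) := by
          rw [AEMeasurable.map_map_of_aemeasurable (by fun_prop) (by fun_prop)]; rfl
      _ = P.map W ⊗ₘ (Kernel.id ×ₖ η) := by
          ext s hs
          rw [h.map_eq, Measure.map_apply (by fun_prop) hs,
            Measure.compProd_apply (hs.preimage (by fun_prop)), Measure.compProd_apply hs]
          refine lintegral_congr fun a ↦ ?_
          rw [Kernel.id_prod_apply' _ _ (measurable_prodMk_left hs)]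
          rfl

lemma HasCondDistrib.prodMk_of_indepFun [IsProbabilityMeasure P] {W : Ω → α} {U : Ω → β}
    {ε : Ω → γ} {η : Kernel α β} [IsSFiniteKernel η] (h : HasCondDistrib U W η P)
    (hε : AEMeasurable ε P) (hind : IndepFun (fun ω ↦ (W ω, U ω)) ε P) :
    HasCondDistrib (fun ω ↦ (U ω, ε ω)) W (η ×ₖ Kernel.const α (P.map ε)) P where
  aemeasurable := h.aemeasurable_fst.prodMk (h.aemeasurable_snd.prodMk hε)
  map_eq := by
    have hW := h.aemeasurable_fst
    have hU := h.aemeasurable_snd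
    have hlaw : P.map (fun ω ↦ ((W ω, U ω), ε ω)) = (P.map W ⊗ₘ η).prod (P.map ε) := by
      rw [(indepFun_iff_map_prod_eq_prod_map_map (by fun_prop) hε).mp hind, h.map_eq]
    calc P.map (fun ω ↦ (W ω, U ω, ε ω))
        = (P.map (fun ω ↦ ((W ω, U ω), ε ω))).map MeasurableEquiv.prodAssoc := by
          rw [AEMeasurable.map_map_of_aemeasurable (by fun_prop) (by fun_prop)]; rfl
      _ = P.map W ⊗ₘ (η ×ₖ Kernel.const α (P.map ε)) := by
          rw [hlaw, ← Measure.compProd_const, ← Measure.compProd_assoc, Measure.map_map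
            (by fun_prop) (by fun_prop), MeasurableEquiv.self_comp_symm, Measure.map_id]
          congr 1
          ext a s hs
          rw [Kernel.compProd_apply hs, Kernel.prod_apply, Kernel.const_apply,
            Measure.prod_apply hs]
          rfl

/-- `w ↦` the law of `f (w, u) + e` for independent `u ∼ η w` and `e ∼ ν`. -/
noncomputable def additiveNoiseKernel (η : Kernel α β) (ν : Measure ℝ) (f : α × β → ℝ) :
    Kernel α ℝ :=
  (Kernel.id ×ₖ (η ×ₖ Kernel.const α ν)).map (fun q ↦ f (q.1, q.2.1) + q.2.2)

instance (η : Kernel α β) [IsFiniteKernel η] (ν : Measure ℝ) [IsFiniteMeasure ν]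
    (f : α × β → ℝ) : IsFiniteKernel (additiveNoiseKernel η ν f) := by
  unfold additiveNoiseKernel; infer_instance

lemma additiveNoiseKernel_apply_Iic (η : Kernel α β) [IsSFiniteKernel η] (ν : Measure ℝ)
    [IsProbabilityMeasure ν] {f : α × β → ℝ} (hf : Measurable f) (a : α) (y : ℝ) :
    additiveNoiseKernel η ν f a (Set.Iic y)
      = ∫⁻ u, ENNReal.ofReal (cdf ν (y - f (a, u))) ∂η a := by
  have hg : Measurable fun q : α × β × ℝ ↦ f (q.1, q.2.1) + q.2.2 := by fun_prop
  rw [additiveNoiseKernel, Kernel.map_apply' _ hg _ measurableSet_Iic,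
    Kernel.id_prod_apply' _ _ (hg measurableSet_Iic), Kernel.prod_apply, Kernel.const_apply,
    Measure.prod_apply (measurable_prodMk_left (hg measurableSet_Iic))]
  refine lintegral_congr fun u ↦ ?_
  rw [ofReal_cdf]
  congr 1
  exact Set.preimage_const_add_Iic (f (a, u)) y

lemma HasCondDistrib.add_of_indepFun [IsProbabilityMeasure P] {W : Ω → α} {U : Ω → β}
    {ε : Ω → ℝ} {η : Kernel α β} [IsSFiniteKernel η] (h : HasCondDistrib U W η P)
    (hε : AEMeasurable ε P) (hind : IndepFun (fun ω ↦ (W ω, U ω)) ε P) {f : α × β → ℝ}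
    (hf : Measurable f) :
    HasCondDistrib (fun ω ↦ f (W ω, U ω) + ε ω) W (additiveNoiseKernel η (P.map ε) f) P :=
  (h.prodMk_of_indepFun hε hind).id_prod.comp_left (f := fun q ↦ f (q.1, q.2.1) + q.2.2)
    (by fun_prop)

lemma cdf_map [IsProbabilityMeasure P] {ε : Ω → ℝ} (hε : AEMeasurable ε P) (t : ℝ) :
    cdf (P.map ε) t = (P {ω | ε ω ≤ t}).toReal := by
  have := Measure.isProbabilityMeasure_map hε
  rw [cdf_eq_real, measureReal_def, Measure.map_apply_of_aemeasurable hε measurableSet_Iic]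
  rfl

lemma lintegral_ofReal_cdf_comp (ν : Measure ℝ) (μ : Measure α) [IsFiniteMeasure μ] {g : α → ℝ}
    (hg : Measurable g) :
    ∫⁻ a, ENNReal.ofReal (cdf ν (g a)) ∂μ = ENNReal.ofReal (∫ a, cdf ν (g a) ∂μ) := by
  refine (ofReal_integral_eq_lintegral_ofReal ?_ (ae_of_all _ fun a ↦ cdf_nonneg ν _)).symm
  refine Integrable.of_bound ((cdf ν).mono.measurable.comp hg).aestronglyMeasurable 1
    (ae_of_all _ fun a ↦ ?_)
  rw [Real.norm_of_nonneg (cdf_nonneg ν _)]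
  exact cdf_le_one ν _

end ProbabilityTheory

theorem condDistrib_eq_integral_cdf_general
    {Ω : Type*} [MeasurableSpace Ω] [StandardBorelSpace Ω] [Nonempty Ω]
    (P : Measure Ω) [IsProbabilityMeasure P]
    {d : ℕ}
    (X : Ω → EuclideanSpace ℝ (Fin d)) (U V ε : Ω → ℝ)
    (β₀ : ℝ → EuclideanSpace ℝ (Fin d))
    (hX : Measurable X) (hU : Measurable U) (hV : Measurable V) (hε : Measurable ε)
    (hβ : Measurable β₀)
    (hUrange : ∀ ω, U ω ∈ Set.Icc (0:ℝ) 1)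
    (Y : Ω → ℝ) (hY : Y = fun ω => ⟪X ω, β₀ (U ω)⟫ + ε ω)
    (hindep : IndepFun ε (fun ω => (X ω, V ω, U ω)) P)
    (hcondindep : CondIndepFun (MeasurableSpace.comap V inferInstance)
      (Measurable.comap_le hV) X U P) :
    ∀ᵐ p ∂(P.map (fun ω => (X ω, V ω))), ∀ y : ℝ,
      condDistrib Y (fun ω => (X ω, V ω)) P p (Set.Iic y)
        = ENNReal.ofReal (∫ u in Set.Icc (0:ℝ) 1,
            (P {ω | ε ω ≤ y - ⟪p.1, β₀ u⟫}).toReal ∂(condDistrib U V P p.2)) := by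
  have := Measure.isProbabilityMeasure_map (μ := P) hε.aemeasurable
  have hf : Measurable fun q : (EuclideanSpace ℝ (Fin d) × ℝ) × ℝ ↦ ⟪q.1.1, β₀ q.2⟫ := by
    fun_prop
  have hUgiven : HasCondDistrib U (fun ω ↦ (X ω, V ω)) ((condDistrib U V P).prodMkLeft _) P :=
    hasCondDistrib_prodMkLeft_of_condIndepFun hX hU hV hcondindep
  have hind : IndepFun (fun ω ↦ ((X ω, V ω), U ω)) ε P :=
    hindep.symm.comp (φ := fun q : EuclideanSpace ℝ (Fin d) × ℝ × ℝ ↦ ((q.1, q.2.1), q.2.2))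
      (by fun_prop) measurable_id
  have hYgiven := hUgiven.add_of_indepFun hε.aemeasurable hind hf
  rw [← hY] at hYgiven
  filter_upwards [condDistrib_ae_eq_of_measure_eq_compProd _ hYgiven.aemeasurable_snd
      hYgiven.map_eq, hUgiven.ae_ae_mem measurableSet_Icc (ae_of_all _ hUrange)] with p hp hpU y
  rw [Kernel.prodMkLeft_apply] at hpU
  rw [hp, additiveNoiseKernel_apply_Iic _ _ hf, Kernel.prodMkLeft_apply,
    lintegral_ofReal_cdf_comp _ _ (by fun_prop), Measure.restrict_eq_self_of_ae_mem hpU]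
  simp_rw [cdf_map hε.aemeasurable]

/-- **Conditional CDF representation (Proposition 1, CDF form).** In the model
`Y = ⟨X, β₀(U)⟩ + ε` with `ε ⟂ (X, V, U)` and `X ⟂ U | σ(V)`, for a.e. `(x, v)` under the
law of `(X, V)`, the regular conditional distribution of `Y` given `(X, V) = (x, v)`
satisfies `P(Y ≤ y | X = x, V = v) = ∫_{[0,1]} F_ε(y − ⟨x, β₀(u)⟩) dκ_v(u)`, where `κ` is a
regular conditional distribution of `U` given `V` and `F_ε(t) = P(ε ≤ t)`. -/
theorem condDistrib_eq_integral_cdf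
    {Ω : Type*} [MeasurableSpace Ω] [StandardBorelSpace Ω] [Nonempty Ω]
    (P : Measure Ω) [IsProbabilityMeasure P]
    {d : ℕ}
    (X : Ω → EuclideanSpace ℝ (Fin d)) (U V ε : Ω → ℝ)
    (β₀ : ℝ → EuclideanSpace ℝ (Fin d))
    (hX : Measurable X) (hU : Measurable U) (hV : Measurable V) (hε : Measurable ε)
    (hβ : Measurable β₀)
    (hUrange : ∀ ω, U ω ∈ Set.Icc (0:ℝ) 1)
    (hVrange : ∀ ω, V ω ∈ Set.Icc (0:ℝ) 1)
    (Y : Ω → ℝ) (hY : Y = fun ω => ⟪X ω, β₀ (U ω)⟫ + ε ω)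
    (hindep : IndepFun ε (fun ω => (X ω, V ω, U ω)) P)
    (hcondindep : CondIndepFun (MeasurableSpace.comap V inferInstance)
      (Measurable.comap_le hV) X U P) :
    ∀ᵐ p ∂(P.map (fun ω => (X ω, V ω))), ∀ y : ℝ,
      condDistrib Y (fun ω => (X ω, V ω)) P p (Set.Iic y)
        = ENNReal.ofReal (∫ u in Set.Icc (0:ℝ) 1,
            (P {ω | ε ω ≤ y - ⟪p.1, β₀ u⟫}).toReal ∂(condDistrib U V P p.2)) :=
  condDistrib_eq_integral_cdf_general P X U V ε β₀ hX hU hV hε hβ hUrange Y hY hindep hcondindep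
end

section
/- Let g, h : [0,1] → ℝ be nondecreasing functions such that the pushforward of Lebesgue measure on [0,1] under g equals the pushforward of Lebesgue measure on [0,1] under h. Then g(u) = h(u) for Lebesgue-almost every u ∈ [0,1]. -/
open MeasureTheory

namespace MonoAux

open Set

/-- A downward-closed subset of `[0,1]` is sandwiched between `Ico 0 s` and `Icc 0 s`. -/
lemma vol_downclosed {S : Set ℝ} (hS : S ⊆ Icc 0 1)
    (hSd : ∀ u ∈ S, ∀ v ∈ Icc (0:ℝ) 1, v ≤ u → v ∈ S) (hne : S.Nonempty) :
    Ico (0:ℝ) (sSup S) ⊆ S ∧ S ⊆ Icc (0:ℝ) (sSup S) ∧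
      volume S = ENNReal.ofReal (sSup S) := by
  obtain ⟨u0, hu0⟩ := hne
  have hbdd : BddAbove S := ⟨1, fun x hx => (hS hx).2⟩
  have hsub1 : Ico (0:ℝ) (sSup S) ⊆ S := by
    intro v hv
    obtain ⟨u, hu, hvu⟩ := exists_lt_of_lt_csSup ⟨u0, hu0⟩ hv.2
    exact hSd u hu v ⟨hv.1, le_of_lt (lt_of_lt_of_le hvu (hS hu).2)⟩ (le_of_lt hvu)
  have hsub2 : S ⊆ Icc (0:ℝ) (sSup S) := fun x hx => ⟨(hS hx).1, le_csSup hbdd hx⟩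
  refine ⟨hsub1, hsub2, le_antisymm ?_ ?_⟩
  · calc volume S ≤ volume (Icc (0:ℝ) (sSup S)) := measure_mono hsub2
      _ = ENNReal.ofReal (sSup S) := by rw [Real.volume_Icc]; ring_nf
  · have : ENNReal.ofReal (sSup S) = volume (Ico (0:ℝ) (sSup S)) := by
      rw [Real.volume_Ico]; ring_nf
    rw [this]; exact measure_mono hsub1

lemma downclosed_diff_null {S T : Set ℝ} (hS : S ⊆ Icc 0 1) (hT : T ⊆ Icc 0 1)
    (hSd : ∀ u ∈ S, ∀ v ∈ Icc (0:ℝ) 1, v ≤ u → v ∈ S)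
    (hTd : ∀ u ∈ T, ∀ v ∈ Icc (0:ℝ) 1, v ≤ u → v ∈ T)
    (hvol : volume S = volume T) : volume (S \ T) = 0 := by
  rcases S.eq_empty_or_nonempty with hSe | hSne
  · simp [hSe]
  obtain ⟨h1, h2, h3⟩ := vol_downclosed hS hSd hSne
  have hs0 : 0 ≤ sSup S := le_csSup ⟨1, fun x hx => (hS hx).2⟩
      (hSd _ hSne.choose_spec 0 (by norm_num) (hS hSne.choose_spec).1)
  rcases T.eq_empty_or_nonempty with hTe | hTne
  · -- then volume S = 0, so sSup S = 0, S ⊆ {0}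
    have : ENNReal.ofReal (sSup S) = 0 := by rw [← h3, hvol, hTe]; simp
    have hs : sSup S = 0 := le_antisymm (by simpa using this) hs0
    have hsub : S \ T ⊆ ({0} : Set ℝ) := by
      intro x hx
      have hx2 := h2 hx.1
      rw [hs] at hx2
      exact le_antisymm hx2.2 hx2.1
    exact measure_mono_null hsub Real.volume_singleton
  · obtain ⟨h1', h2', h3'⟩ := vol_downclosed hT hTd hTne
    have ht0 : 0 ≤ sSup T := le_csSup ⟨1, fun x hx => (hT hx).2⟩
        (hTd _ hTne.choose_spec 0 (by norm_num) (hT hTne.choose_spec).1)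
    have hst : sSup S = sSup T := by
      have : ENNReal.ofReal (sSup S) = ENNReal.ofReal (sSup T) := by
        rw [← h3, ← h3', hvol]
      exact (ENNReal.ofReal_eq_ofReal_iff hs0 ht0).1 this
    have : S \ T ⊆ {sSup S} := by
      intro x hx
      have hxS := h2 hx.1
      have hxT : x ∉ Ico (0:ℝ) (sSup T) := fun hmem => hx.2 (h1' hmem)
      simp only [mem_Ico, not_and, not_lt] at hxT
      exact le_antisymm hxS.2 (by rw [hst]; exact hxT hxS.1)
    exact measure_mono_null this Real.volume_singleton

end MonoAux

/-- **A monotone function is determined a.e. by its distribution.** If `g, h : [0,1] → ℝ` are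
nondecreasing and the pushforwards of Lebesgue measure on `[0,1]` under `g` and `h` agree,
then `g = h` Lebesgue-almost everywhere on `[0,1]`. -/
theorem monotone_map_eq_implies_ae_eq (g h : ℝ → ℝ)
    (hg : MonotoneOn g (Set.Icc (0:ℝ) 1))
    (hh : MonotoneOn h (Set.Icc (0:ℝ) 1))
    (heq : (volume.restrict (Set.Icc (0:ℝ) 1)).map g
      = (volume.restrict (Set.Icc (0:ℝ) 1)).map h) :
    ∀ᵐ u ∂(volume.restrict (Set.Icc (0:ℝ) 1)), g u = h u := by
  classical
  set μ := volume.restrict (Set.Icc (0:ℝ) 1) with hμ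
  -- monotone extensions
  have hproj : ∀ u : ℝ, min 1 (max 0 u) ∈ Set.Icc (0:ℝ) 1 :=
    fun u => ⟨le_min (by norm_num) (le_max_left _ _), min_le_left _ _⟩
  have hproj_eq : ∀ u ∈ Set.Icc (0:ℝ) 1, min 1 (max 0 u) = u := by
    intro u hu
    rw [max_eq_right hu.1, min_eq_right hu.2]
  set g' : ℝ → ℝ := fun u => g (min 1 (max 0 u)) with hg'
  set h' : ℝ → ℝ := fun u => h (min 1 (max 0 u)) with hh'
  have hg'm : Monotone g' := fun a b hab =>
    hg (hproj a) (hproj b) (min_le_min le_rfl (max_le_max le_rfl hab))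
  have hh'm : Monotone h' := fun a b hab =>
    hh (hproj a) (hproj b) (min_le_min le_rfl (max_le_max le_rfl hab))
  have hgae : g =ᵐ[μ] g' := by
    filter_upwards [ae_restrict_mem measurableSet_Icc] with u hu
    simp [hg', hproj_eq u hu]
  have hhae : h =ᵐ[μ] h' := by
    filter_upwards [ae_restrict_mem measurableSet_Icc] with u hu
    simp [hh', hproj_eq u hu]
  have heq' : μ.map g' = μ.map h' := by
    rw [← Measure.map_congr hgae, ← Measure.map_congr hhae]; exact heq
  -- key : distribution functions agree
  have key : ∀ t : ℝ, volume {u ∈ Set.Icc (0:ℝ) 1 | g u ≤ t}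
      = volume {u ∈ Set.Icc (0:ℝ) 1 | h u ≤ t} := by
    intro t
    have e1 : μ.map g' (Set.Iic t) = μ.map h' (Set.Iic t) := by rw [heq']
    rw [Measure.map_apply hg'm.measurable measurableSet_Iic,
        Measure.map_apply hh'm.measurable measurableSet_Iic, hμ,
        Measure.restrict_apply' measurableSet_Icc,
        Measure.restrict_apply' measurableSet_Icc] at e1
    have sg : g' ⁻¹' Set.Iic t ∩ Set.Icc (0:ℝ) 1 = {u ∈ Set.Icc (0:ℝ) 1 | g u ≤ t} := by
      ext u
      simp only [Set.mem_inter_iff, Set.mem_preimage, Set.mem_Iic, Set.mem_setOf_eq, hg']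
      constructor
      · rintro ⟨h1, h2⟩; rw [hproj_eq u h2] at h1; exact ⟨h2, h1⟩
      · rintro ⟨h1, h2⟩; rw [hproj_eq u h1]; exact ⟨h2, h1⟩
    have sh : h' ⁻¹' Set.Iic t ∩ Set.Icc (0:ℝ) 1 = {u ∈ Set.Icc (0:ℝ) 1 | h u ≤ t} := by
      ext u
      simp only [Set.mem_inter_iff, Set.mem_preimage, Set.mem_Iic, Set.mem_setOf_eq, hh']
      constructor
      · rintro ⟨h1, h2⟩; rw [hproj_eq u h2] at h1; exact ⟨h2, h1⟩
      · rintro ⟨h1, h2⟩; rw [hproj_eq u h1]; exact ⟨h2, h1⟩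
    rwa [sg, sh] at e1
  -- the level sets
  set S : ℚ → Set ℝ := fun q => {u ∈ Set.Icc (0:ℝ) 1 | g u ≤ (q:ℝ)} with hS
  set T : ℚ → Set ℝ := fun q => {u ∈ Set.Icc (0:ℝ) 1 | h u ≤ (q:ℝ)} with hT
  have hSsub : ∀ q, S q ⊆ Set.Icc (0:ℝ) 1 := fun q x hx => hx.1
  have hTsub : ∀ q, T q ⊆ Set.Icc (0:ℝ) 1 := fun q x hx => hx.1
  have hSd : ∀ q, ∀ u ∈ S q, ∀ v ∈ Set.Icc (0:ℝ) 1, v ≤ u → v ∈ S q :=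
    fun q u hu v hv hvu => ⟨hv, le_trans (hg hv hu.1 hvu) hu.2⟩
  have hTd : ∀ q, ∀ u ∈ T q, ∀ v ∈ Set.Icc (0:ℝ) 1, v ≤ u → v ∈ T q :=
    fun q u hu v hv hvu => ⟨hv, le_trans (hh hv hu.1 hvu) hu.2⟩
  have hnull : ∀ q : ℚ, volume ((S q \ T q) ∪ (T q \ S q)) = 0 := by
    intro q
    refine measure_union_null ?_ ?_
    · exact MonoAux.downclosed_diff_null (hSsub q) (hTsub q) (hSd q) (hTd q) (key q)
    · exact MonoAux.downclosed_diff_null (hTsub q) (hSsub q) (hTd q) (hSd q) (key q).symm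
  rw [ae_iff, hμ, Measure.restrict_apply' measurableSet_Icc]
  refine measure_mono_null ?_ (measure_iUnion_null hnull)
  intro u hu
  obtain ⟨hne, huI⟩ := hu
  simp only [Set.mem_setOf_eq] at hne
  rcases lt_or_gt_of_ne hne with hlt | hgt
  · obtain ⟨q, hq1, hq2⟩ := exists_rat_btwn hlt
    exact Set.mem_iUnion.2 ⟨q, Or.inl ⟨⟨huI, le_of_lt hq1⟩, fun hc => absurd hc.2 (not_le.2 hq2)⟩⟩
  · obtain ⟨q, hq1, hq2⟩ := exists_rat_btwn hgt
    exact Set.mem_iUnion.2 ⟨q, Or.inr ⟨⟨huI, le_of_lt hq1⟩, fun hc => absurd hc.2 (not_le.2 hq2)⟩⟩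
end

section
/- Let (Ω, 𝓕, P) be a probability space, let (Θ, d) be a compact separable metric space, and let Q : Θ → ℝ be continuous with a unique maximizer θ₀ (Q(θ) < Q(θ₀) for every θ ≠ θ₀). Let Θ_n ⊆ Θ be nonempty closed sets, let θ_n* ∈ Θ_n satisfy d(θ_n*, θ₀) → 0, and for each n let Q̂_n : Ω × Θ → ℝ be measurable in ω and continuous in θ, and let θ̂_n : Ω → Θ be measurable with θ̂_n(ω) ∈ Θ_n and Q̂_n(ω, θ̂_n(ω)) ≥ sup_{θ ∈ Θ_n} Q̂_n(ω, θ) for every ω. If the random variables sup_{θ ∈ Θ_n} |Q̂_n(·, θ) − Q(θ)| converge to 0 in probability, then d(θ̂_n, θ₀) converges to 0 in probability. -/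
open MeasureTheory Filter

/-!
On a compact space a unique maximizer of a continuous `Q` is well separated: for every `ε > 0`
there is `η > 0` such that `Q θ > Q θ₀ - η` forces `dist θ θ₀ < ε`. On the event where the
uniform error `S = sup_{Θₙ} |Q̂ₙ - Q|` is below `η / 3`, the maximizer `θ̂ₙ` of `Q̂ₙ` over `Θₙ`
satisfies `Q θ̂ₙ ≥ Q θₙ* - 2 S > Q θ₀ - η` as soon as `Q θₙ* > Q θ₀ - η / 3`, which holds for
large `n` by continuity of `Q` at `θ₀`. Hence `{dist θ̂ₙ θ₀ ≥ ε} ⊆ {S ≥ η / 3}` eventually.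
-/

theorem Continuous.exists_pos_sub_lt_imp_dist_lt {X : Type*} [MetricSpace X] [CompactSpace X]
    {f : X → ℝ} (hf : Continuous f) {x₀ : X} (hmax : ∀ x, x ≠ x₀ → f x < f x₀)
    {ε : ℝ} (hε : 0 < ε) : ∃ η > 0, ∀ x, f x₀ - η < f x → dist x x₀ < ε := by
  have hfar : IsCompact {x | ε ≤ dist x x₀} :=
    (isClosed_le continuous_const (continuous_id.dist continuous_const)).isCompact
  obtain ⟨η, hη, hgap⟩ := hfar.exists_forall_le' (f := fun x => f x₀ - f x)
    (continuous_const.sub hf).continuousOn (a := 0)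
    fun x hx => sub_pos.2 <| hmax x <| dist_pos.1 <| hε.trans_le hx
  refine ⟨η, hη, fun x hx => not_le.1 fun hxfar => ?_⟩
  linarith [hgap x hxfar]

theorem IsMaxOn.sub_two_mul_le_of_abs_sub_le {α : Type*} {s : Set α} {f g : α → ℝ} {x y : α}
    {c : ℝ} (hmax : IsMaxOn f s x) (hx : x ∈ s) (hy : y ∈ s)
    (hclose : ∀ z ∈ s, |f z - g z| ≤ c) : g y - 2 * c ≤ g x := by
  have hfy : f y ≤ f x := hmax hy
  have hx' := abs_le.1 (hclose x hx)
  have hy' := abs_le.1 (hclose y hy)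
  linarith [hx'.1, hy'.2]

theorem le_biSup_of_bddAbove_range {α β : Type*} [ConditionallyCompleteLattice α] {f : β → α}
    (hf : BddAbove (Set.range f)) {s : Set β} {x : β} (hx : x ∈ s) :
    f x ≤ ⨆ y ∈ s, f y :=
  le_ciSup₂
    (hf.mono <| Set.iUnion_subset fun y => Set.range_subset_iff.2 fun _ => Set.mem_range_self y)
    x hx

theorem MeasureTheory.TendstoInMeasure.of_eventually_setOf_subset {α ι E F : Type*}
    [MeasurableSpace α] [PseudoMetricSpace E] [PseudoMetricSpace F] {μ : Measure α}
    {l : Filter ι} {f : ι → α → E} {f₀ : α → E} {g : ι → α → F} {g₀ : α → F}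
    (hf : TendstoInMeasure μ f l f₀)
    (h : ∀ ε > 0, ∃ δ > 0, ∀ᶠ i in l,
      {ω | ε ≤ dist (g i ω) (g₀ ω)} ⊆ {ω | δ ≤ dist (f i ω) (f₀ ω)}) :
    TendstoInMeasure μ g l g₀ := by
  rw [tendstoInMeasure_iff_dist] at hf ⊢
  intro ε hε
  obtain ⟨δ, hδ, hsub⟩ := h ε hε
  exact tendsto_of_tendsto_of_tendsto_of_le_of_le' tendsto_const_nhds (hf δ hδ)
    (Eventually.of_forall fun _ => zero_le) (hsub.mono fun _ hi => measure_mono hi)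

theorem sieve_consistency_in_probability_general
    {Ω : Type*} [MeasurableSpace Ω] (P : Measure Ω)
    {Θ : Type*} [MetricSpace Θ] [CompactSpace Θ]
    (Q : Θ → ℝ) (hQcont : Continuous Q)
    (θ₀ : Θ) (hmax : ∀ θ : Θ, θ ≠ θ₀ → Q θ < Q θ₀)
    (Θn : ℕ → Set Θ)
    (θstar : ℕ → Θ) (hstarmem : ∀ n, θstar n ∈ Θn n)
    (hstar : Tendsto (fun n => dist (θstar n) θ₀) atTop (nhds 0))
    (Qhat : ℕ → Ω → Θ → ℝ)
    (hQhatcont : ∀ n (ω : Ω), Continuous (fun θ => Qhat n ω θ))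
    (θhat : ℕ → Ω → Θ)
    (hhatmem : ∀ n ω, θhat n ω ∈ Θn n)
    (hhatmax : ∀ n ω, ∀ θ ∈ Θn n, Qhat n ω θ ≤ Qhat n ω (θhat n ω))
    (hunif : TendstoInMeasure P
      (fun n ω => ⨆ θ ∈ Θn n, |Qhat n ω θ - Q θ|) atTop (fun _ => (0:ℝ))) :
    TendstoInMeasure P (fun n ω => θhat n ω) atTop (fun _ => θ₀) := by
  refine hunif.of_eventually_setOf_subset fun ε hε => ?_
  obtain ⟨η, hη, hsep⟩ := hQcont.exists_pos_sub_lt_imp_dist_lt hmax hε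
  have hQstar : ∀ᶠ n in atTop, Q θ₀ - η / 3 < Q (θstar n) :=
    (hQcont.continuousAt.tendsto.comp (tendsto_iff_dist_tendsto_zero.2 hstar)).eventually
      (eventually_gt_nhds (by linarith))
  refine ⟨η / 3, by positivity, hQstar.mono fun n hn ω hfar => ?_⟩
  simp only [Set.mem_ofPred_eq, Real.dist_eq, sub_zero] at hfar ⊢
  by_contra! hsmall
  have hclose : ∀ θ ∈ Θn n, |Qhat n ω θ - Q θ| ≤ ⨆ θ ∈ Θn n, |Qhat n ω θ - Q θ| :=
    fun θ hθ => le_biSup_of_bddAbove_range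
      (isCompact_range ((hQhatcont n ω).sub hQcont).abs).bddAbove hθ
  have hQhat := (isMaxOn_iff.2 (hhatmax n ω)).sub_two_mul_le_of_abs_sub_le
    (hhatmem n ω) (hstarmem n) hclose
  exact (hsep _ (by linarith [le_abs_self (⨆ θ ∈ Θn n, |Qhat n ω θ - Q θ|)])).not_ge hfar

/-- **Stochastic consistency of sieve extremum estimators.** Let `Θ` be a compact separable
metric space, `Q` continuous with unique maximizer `θ₀`, `Θₙ ⊆ Θ` nonempty closed sieve sets
containing points `θₙ* → θ₀`, `Q̂ₙ(ω, θ)` Carathéodory criteria, and `θ̂ₙ(ω) ∈ Θₙ` maximizers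
of `Q̂ₙ(ω, ·)` over `Θₙ`. If `sup_{θ ∈ Θₙ} |Q̂ₙ(·, θ) − Q(θ)| → 0` in probability, then
`θ̂ₙ → θ₀` in probability. -/
theorem sieve_consistency_in_probability
    {Ω : Type*} [MeasurableSpace Ω] (P : Measure Ω) [IsProbabilityMeasure P]
    {Θ : Type*} [MetricSpace Θ] [CompactSpace Θ] [TopologicalSpace.SeparableSpace Θ]
    [MeasurableSpace Θ] [BorelSpace Θ]
    (Q : Θ → ℝ) (hQcont : Continuous Q)
    (θ₀ : Θ) (hmax : ∀ θ : Θ, θ ≠ θ₀ → Q θ < Q θ₀)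
    (Θn : ℕ → Set Θ) (hne : ∀ n, (Θn n).Nonempty) (hcl : ∀ n, IsClosed (Θn n))
    (θstar : ℕ → Θ) (hstarmem : ∀ n, θstar n ∈ Θn n)
    (hstar : Tendsto (fun n => dist (θstar n) θ₀) atTop (nhds 0))
    (Qhat : ℕ → Ω → Θ → ℝ)
    (hQhatmeas : ∀ n (θ : Θ), Measurable (fun ω => Qhat n ω θ))
    (hQhatcont : ∀ n (ω : Ω), Continuous (fun θ => Qhat n ω θ))
    (θhat : ℕ → Ω → Θ) (hθhatmeas : ∀ n, Measurable (θhat n))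
    (hhatmem : ∀ n ω, θhat n ω ∈ Θn n)
    (hhatmax : ∀ n ω, ∀ θ ∈ Θn n, Qhat n ω θ ≤ Qhat n ω (θhat n ω))
    (hunif : TendstoInMeasure P
      (fun n ω => ⨆ θ ∈ Θn n, |Qhat n ω θ - Q θ|) atTop (fun _ => (0:ℝ))) :
    TendstoInMeasure P (fun n ω => θhat n ω) atTop (fun _ => θ₀) :=
  sieve_consistency_in_probability_general P Q hQcont θ₀ hmax Θn θstar hstarmem hstar Qhat hQhatcont
    θhat hhatmem hhatmax hunif
end

section
/- Let μ and ν be Borel probability measures on ℝ with characteristic functions φ_μ(s) = ∫ e^{i s x} dμ(x) and φ_ν(s) = ∫ e^{i s x} dν(x). Let q > 0 and suppose that ∫₀^q |φ_μ(s) − φ_ν(s)| / s ds < ∞ and ∫_q^∞ (|φ_μ(s)| + |φ_ν(s)|) / s ds < ∞. Then for every t ∈ ℝ with μ({t}) = 0 and ν({t}) = 0, |μ((−∞, t]) − ν((−∞, t])| ≤ (1/π) ∫₀^q |φ_μ(s) − φ_ν(s)| / s ds + (1/π) ∫_q^∞ (|φ_μ(s)| + |φ_ν(s)|) / s ds. 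-/
/-!
Write `a_μ(s) = ∫ sin (s (x - t)) dμ(x) = Im (e^{-ist} φ_μ(s))`. On a truncation `[ε, T]`,
Fubini gives `∫_ε^T a_μ(s)/s ds = ∫ (Si (T (x - t)) - Si (ε (x - t))) dμ(x)`, where the sine
integral `Si` is bounded and tends to `±π/2` at `±∞` (Dirichlet's integral, evaluated through a
Laplace transform). Dominated convergence then gives the Gil–Pelaez formula
`∫_0^∞ a_μ(s)/s ds = π/2 (1 - 2 F_μ(t))` at a continuity point `t`, as an improper integral.
For the difference `a_μ - a_ν` the integral converges absolutely by the hypotheses, so splitting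
it at `q` and using `|a_μ - a_ν| ≤ |φ_μ - φ_ν|` and `|a_μ| ≤ |φ_μ|` bounds `π |F_μ(t) - F_ν(t)|`.
-/

open MeasureTheory Set Filter Topology Real Complex

noncomputable def sineIntegral (x : ℝ) : ℝ := ∫ s in (0 : ℝ)..x, sinc s

lemma sineIntegral_zero : sineIntegral 0 = 0 := intervalIntegral.integral_same

@[fun_prop]
lemma continuous_sineIntegral : Continuous sineIntegral :=
  intervalIntegral.continuous_primitive (fun _ _ ↦ continuous_sinc.intervalIntegrable _ _) 0

lemma sineIntegral_neg (x : ℝ) : sineIntegral (-x) = -sineIntegral x := by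
  have := intervalIntegral.integral_comp_neg (a := 0) (b := x) sinc
  simp only [sinc_neg, neg_zero] at this
  rw [sineIntegral, sineIntegral, this, intervalIntegral.integral_symm]

lemma integral_sin_mul_div_eq {a b : ℝ} (ha : 0 < a) (hb : 0 < b) (u : ℝ) :
    ∫ s in a..b, Real.sin (s * u) / s = sineIntegral (b * u) - sineIntegral (a * u) := by
  have hsinc : ∀ s ∈ uIcc a b, Real.sin (s * u) / s = u * sinc (s * u) := by
    intro s hs
    have hs0 : s ≠ 0 := ((lt_min ha hb).trans_le hs.1).ne'
    rcases eq_or_ne u 0 with rfl | hu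
    · simp
    · rw [sinc_of_ne_zero (mul_ne_zero hs0 hu)]
      field_simp
  rw [intervalIntegral.integral_congr hsinc, intervalIntegral.integral_const_mul,
    intervalIntegral.mul_integral_comp_mul_right,
    sineIntegral, sineIntegral, intervalIntegral.integral_interval_sub_left]
  all_goals exact continuous_sinc.intervalIntegrable _ _

lemma integral_sin_mul_exp_neg_mul (u T : ℝ) :
    ∫ s in (0 : ℝ)..T, Real.sin s * rexp (-s * u)
      = (1 - rexp (-T * u) * (Real.cos T + u * Real.sin T)) / (1 + u ^ 2) := by
  have hderiv : ∀ s : ℝ, HasDerivAt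
      (fun s ↦ -(rexp (-s * u) * (Real.cos s + u * Real.sin s)) / (1 + u ^ 2))
      (Real.sin s * rexp (-s * u)) s := by
    intro s
    have hexp := ((hasDerivAt_id s).neg.mul_const u).exp
    have htrig := (Real.hasDerivAt_cos s).add ((Real.hasDerivAt_sin s).const_mul u)
    refine (((hexp.mul htrig).neg).div_const _).congr_deriv ?_
    simp only [Pi.add_apply, Pi.neg_apply, id]
    field_simp
    ring
  rw [intervalIntegral.integral_eq_sub_of_hasDerivAt (fun s _ ↦ hderiv s)
    (by apply Continuous.intervalIntegrable; fun_prop)]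
  simp only [neg_zero, zero_mul, Real.exp_zero, Real.cos_zero, Real.sin_zero]
  ring

lemma integral_Ioi_exp_neg_mul {s : ℝ} (hs : 0 < s) : ∫ u in Ioi 0, rexp (-s * u) = s⁻¹ := by
  rw [integral_exp_mul_Ioi (neg_neg_of_pos hs)]
  simp [neg_div, div_neg]

lemma sineIntegral_eq_integral_Ioi {T : ℝ} (hT : 0 < T) :
    sineIntegral T
      = ∫ u in Ioi 0, (1 - rexp (-T * u) * (Real.cos T + u * Real.sin T)) / (1 + u ^ 2) := by
  set F : ℝ → ℝ → ℝ := fun s u ↦ Real.sin s * rexp (-s * u)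
  have hF : Continuous (Function.uncurry F) := by fun_prop
  have hinner : ∀ s ∈ Ioc 0 T, ∫ u in Ioi 0, ‖F s u‖ = |Real.sin s| / s := by
    intro s hs
    simp only [F, norm_mul, Real.norm_eq_abs, abs_of_pos (Real.exp_pos _), integral_const_mul,
      integral_Ioi_exp_neg_mul hs.1, div_eq_mul_inv]
  have hint : Integrable (Function.uncurry F)
      ((volume.restrict (Ioc 0 T)).prod (volume.restrict (Ioi 0))) := by
    rw [integrable_prod_iff hF.aestronglyMeasurable]
    refine ⟨ae_restrict_of_forall_mem measurableSet_Ioc fun s hs ↦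
      (integrableOn_exp_mul_Ioi (neg_neg_of_pos hs.1) 0).const_mul (Real.sin s), ?_⟩
    refine (integrable_const 1).mono' hF.aestronglyMeasurable.norm.integral_prod_right'
      (ae_restrict_of_forall_mem measurableSet_Ioc fun s hs ↦ ?_)
    simp only [Function.uncurry_apply_pair]
    rw [hinner s hs, Real.norm_eq_abs, abs_div, abs_abs, abs_of_pos hs.1]
    exact div_le_one_of_le₀ (abs_sin_le_abs.trans_eq (abs_of_pos hs.1)) hs.1.le
  calc sineIntegral T = ∫ s in Ioc 0 T, ∫ u in Ioi 0, F s u := by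
        rw [sineIntegral, intervalIntegral.integral_of_le hT.le]
        refine setIntegral_congr_fun measurableSet_Ioc fun s hs ↦ ?_
        simp only [F, integral_const_mul, integral_Ioi_exp_neg_mul hs.1,
          sinc_of_ne_zero hs.1.ne', div_eq_mul_inv]
    _ = ∫ u in Ioi 0, ∫ s in Ioc 0 T, F s u := integral_integral_swap hint
    _ = _ := by
        refine setIntegral_congr_fun measurableSet_Ioi fun u _ ↦ ?_
        rw [← intervalIntegral.integral_of_le hT.le, integral_sin_mul_exp_neg_mul]

lemma abs_exp_mul_cos_add_mul_sin_le {u : ℝ} (hu : 0 ≤ u) (T : ℝ) :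
    |rexp (-T * u) * (Real.cos T + u * Real.sin T)| ≤ rexp (-T * u) * (1 + u) := by
  rw [abs_mul, abs_of_pos (Real.exp_pos _)]
  gcongr
  calc |Real.cos T + u * Real.sin T| ≤ |Real.cos T| + u * |Real.sin T| := by
        simpa [abs_mul, abs_of_nonneg hu] using abs_add_le (Real.cos T) (u * Real.sin T)
    _ ≤ 1 + u * 1 := by gcongr <;> [exact abs_cos_le_one T; exact abs_sin_le_one T]
    _ = 1 + u := by ring

lemma tendsto_sineIntegral_atTop : Tendsto sineIntegral atTop (𝓝 (π / 2)) := by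
  have hlim : ∫ u in Ioi (0 : ℝ), (1 + u ^ 2)⁻¹ = π / 2 := by
    rw [integral_Ioi_inv_one_add_sq]; simp
  rw [← hlim]
  refine Tendsto.congr' ((eventually_gt_atTop 0).mono fun T hT ↦
    (sineIntegral_eq_integral_Ioi hT).symm) ?_
  refine tendsto_integral_filter_of_dominated_convergence (fun u ↦ 2 * (1 + u ^ 2)⁻¹)
    (Eventually.of_forall fun T ↦ (Continuous.div (by fun_prop) (by fun_prop)
      fun u ↦ by positivity).aestronglyMeasurable) ?_
    (integrable_inv_one_add_sq.const_mul 2).integrableOn ?_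
  · filter_upwards [eventually_ge_atTop 1] with T hT
    filter_upwards [ae_restrict_mem measurableSet_Ioi] with u (hu : 0 < u)
    have hE : |rexp (-T * u) * (Real.cos T + u * Real.sin T)| ≤ 1 :=
      calc _ ≤ rexp (-T * u) * (1 + u) := abs_exp_mul_cos_add_mul_sin_le hu.le T
        _ ≤ rexp (-u) * rexp u := by
            gcongr
            · nlinarith
            · linarith [Real.add_one_le_exp u]
        _ = 1 := by rw [← Real.exp_add, neg_add_cancel, Real.exp_zero]
    have hd : 0 < 1 + u ^ 2 := by positivity
    rw [Real.norm_eq_abs, abs_div, abs_of_pos hd, div_eq_mul_inv]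
    gcongr
    obtain ⟨hE₁, hE₂⟩ := abs_le.1 hE
    exact abs_le.2 ⟨by linarith, by linarith⟩
  · filter_upwards [ae_restrict_mem measurableSet_Ioi] with u (hu : 0 < u)
    have hexp : Tendsto (fun T ↦ rexp (-T * u) * (1 + u)) atTop (𝓝 0) := by
      simpa using (Real.tendsto_exp_atBot.comp
        (tendsto_neg_atTop_atBot.atBot_mul_const hu)).mul_const (1 + u)
    have hE := squeeze_zero_norm
      (fun T ↦ (Real.norm_eq_abs _).trans_le (abs_exp_mul_cos_add_mul_sin_le hu.le T)) hexp
    simpa using (hE.const_sub 1).div_const (1 + u ^ 2)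

lemma tendsto_sineIntegral_atBot : Tendsto sineIntegral atBot (𝓝 (-(π / 2))) := by
  simpa [Function.comp_def, sineIntegral_neg] using
    (tendsto_sineIntegral_atTop.comp tendsto_neg_atBot_atTop).neg

lemma exists_abs_sineIntegral_le : ∃ C, ∀ x, |sineIntegral x| ≤ C := by
  obtain ⟨M, hM⟩ := eventually_atTop.1 <| (tendsto_order.1
    ((continuous_abs.tendsto _).comp tendsto_sineIntegral_atTop)).2 (|π / 2| + 1) (by linarith)
  obtain ⟨C, hC⟩ := (isCompact_Icc (a := 0) (b := M)).exists_bound_of_continuousOn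
    continuous_sineIntegral.continuousOn
  refine ⟨max C (|π / 2| + 1), fun x ↦ ?_⟩
  wlog hx : 0 ≤ x generalizing x
  · simpa [sineIntegral_neg] using this (-x) (by linarith)
  rcases le_total x M with hxM | hMx
  · exact (hC x ⟨hx, hxM⟩).trans (le_max_left _ _)
  · exact (hM x hMx).le.trans (le_max_right _ _)

lemma tendsto_sineIntegral_mul_atTop (u : ℝ) :
    Tendsto (fun T ↦ sineIntegral (T * u)) atTop (𝓝 (π / 2 * Real.sign u)) := by
  rcases lt_trichotomy u 0 with hu | rfl | hu
  · simpa [Real.sign_of_neg hu, Function.comp_def] using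
      tendsto_sineIntegral_atBot.comp (tendsto_id.atTop_mul_const_of_neg hu)
  · simp [sineIntegral_zero]
  · simpa [Real.sign_of_pos hu, Function.comp_def] using
      tendsto_sineIntegral_atTop.comp (tendsto_id.atTop_mul_const hu)

noncomputable def sinTransform (μ : Measure ℝ) (t s : ℝ) : ℝ := ∫ x, Real.sin (s * (x - t)) ∂μ

section SinTransform

variable (μ ν : Measure ℝ) [IsFiniteMeasure μ] [IsFiniteMeasure ν] (t : ℝ)

lemma sinTransform_eq_im_charFun (s : ℝ) :
    sinTransform μ t s = (cexp ((-(s * t) : ℝ) * I) * charFun μ s).im := by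
  have hexp : ∀ x : ℝ, cexp ((-(s * t) : ℝ) * I) * cexp (s * x * I)
      = cexp ((s * (x - t) : ℝ) * I) := by
    intro x
    rw [← Complex.exp_add]
    push_cast
    ring_nf
  have hint : Integrable (fun x : ℝ ↦ cexp ((s * (x - t) : ℝ) * I)) μ :=
    (integrable_const (1 : ℝ)).mono' (by fun_prop)
      (ae_of_all _ fun x ↦ (Complex.norm_exp_ofReal_mul_I _).le)
  simp_rw [sinTransform, charFun_apply_real, ← integral_const_mul, hexp,
    ← Complex.exp_ofReal_mul_I_im]
  exact integral_im hint

lemma measurable_sinTransform : Measurable (sinTransform μ t) := by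
  simp_rw [funext (sinTransform_eq_im_charFun μ t)]
  fun_prop

lemma abs_sinTransform_sub_le (s : ℝ) :
    |sinTransform μ t s - sinTransform ν t s| ≤ ‖charFun μ s - charFun ν s‖ := by
  rw [sinTransform_eq_im_charFun, sinTransform_eq_im_charFun, ← Complex.sub_im, ← mul_sub]
  refine (Complex.abs_im_le_norm _).trans_eq ?_
  rw [norm_mul, Complex.norm_exp_ofReal_mul_I, one_mul]

lemma abs_sinTransform_le (s : ℝ) : |sinTransform μ t s| ≤ ‖charFun μ s‖ := by
  simpa [sinTransform] using abs_sinTransform_sub_le μ 0 t s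

variable {ε T : ℝ}

lemma integrableOn_Ioc_sinTransform_div (hε : 0 < ε) :
    IntegrableOn (fun s ↦ sinTransform μ t s / s) (Ioc ε T) := by
  refine (integrable_const (μ.real univ / ε)).mono'
    ((measurable_sinTransform μ t).div measurable_id).aestronglyMeasurable
    (ae_restrict_of_forall_mem measurableSet_Ioc fun s hs ↦ ?_)
  have hs0 : 0 < s := hε.trans hs.1
  rw [Real.norm_eq_abs, abs_div, abs_of_pos hs0]
  calc |sinTransform μ t s| / s ≤ μ.real univ / s := by
        gcongr
        exact (abs_sinTransform_le μ t s).trans (norm_charFun_le s)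
    _ ≤ μ.real univ / ε := by gcongr; exact hs.1.le

/-- Fubini applies because on `[ε, T] × ℝ` the kernel `sin (s (x - t)) / s` is bounded by `ε⁻¹`;
on `(0, ∞) × ℝ` it is not integrable. -/
lemma setIntegral_Ioc_sinTransform_div (hε : 0 < ε) (hεT : ε ≤ T) :
    ∫ s in Ioc ε T, sinTransform μ t s / s
      = ∫ x, (sineIntegral (T * (x - t)) - sineIntegral (ε * (x - t))) ∂μ := by
  have hint : Integrable (Function.uncurry fun s x ↦ Real.sin (s * (x - t)) / s)
      ((volume.restrict (Ioc ε T)).prod μ) := by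
    refine (integrable_const ε⁻¹).mono'
      (Measurable.div (by fun_prop) measurable_fst).aestronglyMeasurable ?_
    filter_upwards [Measure.quasiMeasurePreserving_fst.ae
      (ae_restrict_mem measurableSet_Ioc)] with p hp
    have hp0 : 0 < p.1 := hε.trans hp.1
    rw [Function.uncurry_apply_pair, Real.norm_eq_abs, abs_div, abs_of_pos hp0, div_eq_mul_inv]
    calc |Real.sin (p.1 * (p.2 - t))| * p.1⁻¹ ≤ 1 * ε⁻¹ := by
          gcongr
          · exact abs_sin_le_one _
          · exact hp.1.le
      _ = ε⁻¹ := one_mul _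
  calc ∫ s in Ioc ε T, sinTransform μ t s / s
      = ∫ s in Ioc ε T, ∫ x, Real.sin (s * (x - t)) / s ∂μ := by
        simp_rw [sinTransform, integral_div]
    _ = ∫ x, (∫ s in Ioc ε T, Real.sin (s * (x - t)) / s) ∂μ := integral_integral_swap hint
    _ = _ := by
        refine integral_congr_ae (ae_of_all _ fun x ↦ ?_)
        beta_reduce
        rw [← intervalIntegral.integral_of_le hεT, integral_sin_mul_div_eq hε (hε.trans_le hεT)]

end SinTransform

section Truncation

variable {ι : Type*} {l : Filter ι} [l.IsCountablyGenerated] {ε T : ι → ℝ}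

lemma tendsto_setIntegral_Ioc_sinTransform_div (μ : Measure ℝ) [IsFiniteMeasure μ] (t : ℝ)
    (hε : Tendsto ε l (𝓝 0)) (hT : Tendsto T l atTop) (hε0 : ∀ i, 0 < ε i)
    (hεT : ∀ i, ε i ≤ T i) :
    Tendsto (fun i ↦ ∫ s in Ioc (ε i) (T i), sinTransform μ t s / s) l
      (𝓝 (π / 2 * ∫ x, Real.sign (x - t) ∂μ)) := by
  obtain ⟨C, hC⟩ := exists_abs_sineIntegral_le
  simp_rw [setIntegral_Ioc_sinTransform_div μ t (hε0 _) (hεT _), ← integral_const_mul]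
  refine tendsto_integral_filter_of_dominated_convergence (fun _ ↦ C + C)
    (Eventually.of_forall fun i ↦ (by fun_prop : Continuous fun x ↦
      sineIntegral (T i * (x - t)) - sineIntegral (ε i * (x - t))).aestronglyMeasurable)
    (Eventually.of_forall fun i ↦ ae_of_all _ fun x ↦
      (abs_sub _ _).trans (add_le_add (hC _) (hC _)))
    (integrable_const _) (ae_of_all _ fun x ↦ ?_)
  have hsmall : Tendsto (fun i ↦ sineIntegral (ε i * (x - t))) l (𝓝 0) := by
    simpa [sineIntegral_zero, Function.comp_def] using
      (continuous_sineIntegral.tendsto 0).comp (by simpa using hε.mul_const (x - t))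
  simpa using ((tendsto_sineIntegral_mul_atTop (x - t)).comp hT).sub hsmall

lemma tendsto_setIntegral_Ioc_of_integrableOn_Ioi {E : Type*} [NormedAddCommGroup E]
    [NormedSpace ℝ E] {g : ℝ → E} {a : ℝ} (hε : Tendsto ε l (𝓝 a)) (hT : Tendsto T l atTop)
    (hε0 : ∀ i, a ≤ ε i) (hg : IntegrableOn g (Ioi a)) :
    Tendsto (fun i ↦ ∫ s in Ioc (ε i) (T i), g s) l (𝓝 (∫ s in Ioi a, g s)) := by
  have hcover : AECover (volume.restrict (Ioi a)) l fun i ↦ Ioc (ε i) (T i) :=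
    (aecover_Ioi_of_Ioi hε).inter (aecover_Iic hT)
  have hrestrict : ∀ i, (volume.restrict (Ioi a)).restrict (Ioc (ε i) (T i))
      = volume.restrict (Ioc (ε i) (T i)) := fun i ↦ by
    rw [Measure.restrict_restrict measurableSet_Ioc,
      inter_eq_left.2 (Ioc_subset_Ioi_self.trans (Ioi_subset_Ioi (hε0 i)))]
  simpa only [hrestrict] using hcover.integral_tendsto_of_countably_generated hg

end Truncation

lemma integral_sign_sub (μ : Measure ℝ) [IsProbabilityMeasure μ] {t : ℝ} (ht : μ {t} = 0) :
    ∫ x, Real.sign (x - t) ∂μ = 1 - 2 * μ.real (Iic t) := by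
  have hae : ∀ᵐ x ∂μ, Real.sign (x - t) = 1 - 2 * (Iic t).indicator 1 x := by
    filter_upwards [measure_eq_zero_iff_ae_notMem.1 ht] with x hx
    rcases lt_or_gt_of_ne hx with h | h
    · simp only [Real.sign_of_neg (sub_neg.2 h), mem_Iic, h.le, indicator_of_mem, Pi.one_apply,
        mul_one]
      norm_num
    · simp [Real.sign_of_pos (sub_pos.2 h), not_le.2 h]
  rw [integral_congr_ae hae, integral_sub (integrable_const _)
    ((integrable_const _).indicator measurableSet_Iic |>.const_mul 2)]
  simp [integral_const_mul, integral_indicator_one measurableSet_Iic]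

theorem integral_Ioi_sinTransform_sub_div (μ ν : Measure ℝ) [IsProbabilityMeasure μ]
    [IsProbabilityMeasure ν] {t : ℝ} (hμ : μ {t} = 0) (hν : ν {t} = 0)
    (hint : IntegrableOn (fun s ↦ (sinTransform μ t s - sinTransform ν t s) / s) (Ioi 0)) :
    ∫ s in Ioi 0, (sinTransform μ t s - sinTransform ν t s) / s
      = π * (ν.real (Iic t) - μ.real (Iic t)) := by
  have hε : Tendsto (fun n : ℕ ↦ 1 / ((n : ℝ) + 1)) atTop (𝓝 0) :=
    tendsto_one_div_add_atTop_nhds_zero_nat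
  have hT : Tendsto (fun n : ℕ ↦ (n : ℝ) + 1) atTop atTop :=
    tendsto_atTop_add_const_right _ 1 tendsto_natCast_atTop_atTop
  have hε0 : ∀ n : ℕ, 0 < 1 / ((n : ℝ) + 1) := fun n ↦ by positivity
  have hεT : ∀ n : ℕ, 1 / ((n : ℝ) + 1) ≤ n + 1 := fun n ↦
    (div_le_one (by positivity)).2 (by simp) |>.trans (by simp)
  refine tendsto_nhds_unique
    (tendsto_setIntegral_Ioc_of_integrableOn_Ioi hε hT (fun n ↦ (hε0 n).le) hint) ?_
  have hlim := (tendsto_setIntegral_Ioc_sinTransform_div μ t hε hT hε0 hεT).sub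
    (tendsto_setIntegral_Ioc_sinTransform_div ν t hε hT hε0 hεT)
  rw [integral_sign_sub μ hμ, integral_sign_sub ν hν] at hlim
  convert hlim using 2 with n
  · simp_rw [sub_div]
    exact integral_sub (integrableOn_Ioc_sinTransform_div μ t (hε0 n))
      (integrableOn_Ioc_sinTransform_div ν t (hε0 n))
  · ring

section SplitBound

variable {E : Type*} [NormedAddCommGroup E] {g : ℝ → E} {A B : ℝ → ℝ} {a q : ℝ}

lemma integrableOn_Ioi_of_norm_le (hg : AEStronglyMeasurable g (volume.restrict (Ioi a)))
    (haq : a ≤ q) (hA : IntegrableOn A (Ioc a q)) (hB : IntegrableOn B (Ioi q))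
    (hgA : ∀ s ∈ Ioc a q, ‖g s‖ ≤ A s) (hgB : ∀ s ∈ Ioi q, ‖g s‖ ≤ B s) :
    IntegrableOn g (Ioi a) := by
  rw [← Ioc_union_Ioi_eq_Ioi haq]
  exact IntegrableOn.union
    (hA.mono' (hg.mono_set Ioc_subset_Ioi_self) (ae_restrict_of_forall_mem measurableSet_Ioc hgA))
    (hB.mono' (hg.mono_set (Ioi_subset_Ioi haq)) (ae_restrict_of_forall_mem measurableSet_Ioi hgB))

lemma norm_setIntegral_Ioi_le [NormedSpace ℝ E]
    (hg : AEStronglyMeasurable g (volume.restrict (Ioi a)))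
    (haq : a ≤ q) (hA : IntegrableOn A (Ioc a q)) (hB : IntegrableOn B (Ioi q))
    (hgA : ∀ s ∈ Ioc a q, ‖g s‖ ≤ A s) (hgB : ∀ s ∈ Ioi q, ‖g s‖ ≤ B s) :
    ‖∫ s in Ioi a, g s‖ ≤ (∫ s in Ioc a q, A s) + ∫ s in Ioi q, B s := by
  have hint := integrableOn_Ioi_of_norm_le hg haq hA hB hgA hgB
  rw [← Ioc_union_Ioi_eq_Ioi haq, setIntegral_union (Ioc_disjoint_Ioi le_rfl) measurableSet_Ioi
    (hint.mono_set Ioc_subset_Ioi_self) (hint.mono_set (Ioi_subset_Ioi haq))]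
  exact (norm_add_le _ _).trans (add_le_add
    (norm_integral_le_of_norm_le hA (ae_restrict_of_forall_mem measurableSet_Ioc hgA))
    (norm_integral_le_of_norm_le hB (ae_restrict_of_forall_mem measurableSet_Ioi hgB)))

end SplitBound

/-- **Gil–Pelaez / smoothing bound on CDF differences.** For Borel probability measures
`μ, ν` on `ℝ` with characteristic functions `φ_μ, φ_ν`, a cutoff `q > 0` and the stated
integrability, at every continuity point `t` of both measures,
`|F_μ(t) − F_ν(t)| ≤ (1/π)∫₀^q |φ_μ − φ_ν|/s ds + (1/π)∫_q^∞ (|φ_μ| + |φ_ν|)/s ds`. -/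
theorem charFun_smoothing_cdf_bound
    (μ ν : Measure ℝ) [IsProbabilityMeasure μ] [IsProbabilityMeasure ν]
    (q : ℝ) (hq : 0 < q)
    (h1 : IntegrableOn (fun s : ℝ =>
      ‖(∫ x, Complex.exp (Complex.I * (s : ℂ) * (x : ℂ)) ∂μ)
        - (∫ x, Complex.exp (Complex.I * (s : ℂ) * (x : ℂ)) ∂ν)‖ / s)
      (Set.Ioc 0 q) volume)
    (h2 : IntegrableOn (fun s : ℝ =>
      (‖∫ x, Complex.exp (Complex.I * (s : ℂ) * (x : ℂ)) ∂μ‖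
        + ‖∫ x, Complex.exp (Complex.I * (s : ℂ) * (x : ℂ)) ∂ν‖) / s)
      (Set.Ioi q) volume) :
    ∀ t : ℝ, μ {t} = 0 → ν {t} = 0 →
      |(μ (Set.Iic t)).toReal - (ν (Set.Iic t)).toReal| ≤
        (1 / Real.pi) * (∫ s in Set.Ioc (0:ℝ) q,
          ‖(∫ x, Complex.exp (Complex.I * (s : ℂ) * (x : ℂ)) ∂μ)
            - (∫ x, Complex.exp (Complex.I * (s : ℂ) * (x : ℂ)) ∂ν)‖ / s)
        + (1 / Real.pi) * (∫ s in Set.Ioi q,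
          (‖∫ x, Complex.exp (Complex.I * (s : ℂ) * (x : ℂ)) ∂μ‖
            + ‖∫ x, Complex.exp (Complex.I * (s : ℂ) * (x : ℂ)) ∂ν‖) / s) := by
  intro t hμt hνt
  have hcharFun : ∀ (ρ : Measure ℝ) (s : ℝ), ∫ x, cexp (I * s * x) ∂ρ = charFun ρ s :=
    fun ρ s ↦ by simp only [charFun_apply_real, mul_comm I, mul_right_comm]
  simp only [hcharFun] at h1 h2 ⊢
  set g : ℝ → ℝ := fun s ↦ (sinTransform μ t s - sinTransform ν t s) / s
  have hg : AEStronglyMeasurable g (volume.restrict (Ioi 0)) :=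
    (((measurable_sinTransform μ t).sub (measurable_sinTransform ν t)).div
      measurable_id).aestronglyMeasurable
  have hg_low : ∀ s ∈ Ioc 0 q, ‖g s‖ ≤ ‖charFun μ s - charFun ν s‖ / s := fun s hs ↦ by
    rw [norm_div, Real.norm_of_nonneg hs.1.le]
    exact div_le_div_of_nonneg_right (abs_sinTransform_sub_le μ ν t s) hs.1.le
  have hg_high : ∀ s ∈ Ioi q, ‖g s‖ ≤ (‖charFun μ s‖ + ‖charFun ν s‖) / s := fun s hs ↦ by
    rw [norm_div, Real.norm_of_nonneg (hq.trans hs).le]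
    exact div_le_div_of_nonneg_right ((abs_sub _ _).trans
      (add_le_add (abs_sinTransform_le μ t s) (abs_sinTransform_le ν t s))) (hq.trans hs).le
  have hinv := integral_Ioi_sinTransform_sub_div μ ν hμt hνt
    (integrableOn_Ioi_of_norm_le hg hq.le h1 h2 hg_low hg_high)
  have hcdf : (μ (Iic t)).toReal - (ν (Iic t)).toReal = -(∫ s in Ioi 0, g s) / π := by
    rw [hinv, measureReal_def, measureReal_def]
    field_simp
    ring
  rw [hcdf, abs_div, abs_neg, abs_of_pos pi_pos, ← mul_add, one_div_mul_eq_div]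
  gcongr
  exact norm_setIntegral_Ioi_le hg hq.le h1 h2 hg_low hg_high
end
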